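/- Let (M, τ) be a semifinite von Neumann algebra, 0 ≤ z ∈ S(M,τ), λ > 0, and r = e^z(λ, ∞) the spectral projection of z for (λ, ∞), with t = τ(r) < ∞. If p is a projection in M with τ(p) = t and μ(s; pzp) = μ(s; z) for all s ∈ (0, t), then p = r. -/

import Mathlib

open Matrix ComplexOrder

/-- The singular values of a matrix, sorted in increasing order. -/
noncomputable def svSorted {n : ℕ} (A : Matrix (Fin n) (Fin n) ℂ) : Fin n → ℝ :=
  fun i => Real.sqrt ((Matrix.posSemidef_conjTranspose_mul_self A).1.eigenvalues
    (Tuple.sort (Matrix.posSemidef_conjTranspose_mul_self A).1.eigenvalues i))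

/-!
Conjugating by the eigenvector unitary of `z` turns `z` into `diagonal d` and `p` into a
projection `q` whose diagonal `c j = re (q j j)` lies in `[0, 1]` and sums to `t`; moreover
`tr (p z p) = ∑ d j c j`. Since the `t` largest eigenvalues of `p z p` are those of `z`,
`∑_{λ < d j} d j ≤ tr (p z p) = ∑ d j c j`. But
`∑_{λ < d j} (d j - λ) (1 - c j) + ∑_{d j ≤ λ} (λ - d j) c j = ∑_{λ < d j} d j - ∑ d j c j`
is a sum of nonnegative terms, so `c` is the indicator of `{λ < d}`, and a projection with a
`0`/`1` diagonal is that diagonal matrix.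
-/

open Finset

namespace Tuple

variable {n : ℕ} {α : Type*} [LinearOrder α]

theorem comp_sort_eq_comp_sort_of_map_eq {f g : Fin n → α}
    (h : univ.val.map f = univ.val.map g) : f ∘ sort f = g ∘ sort g := by
  have hperm (φ : Fin n → α) : univ.val.map (φ ∘ sort φ) = univ.val.map φ := by
    rw [← Multiset.map_map, Multiset.map_univ_val_equiv]
  apply List.ofFn_injective
  refine List.Perm.eq_of_sortedLE (monotone_sort f).sortedLE_ofFn
    (monotone_sort g).sortedLE_ofFn ?_
  rw [← Multiset.coe_eq_coe, ← Fin.univ_val_map, ← Fin.univ_val_map, hperm, hperm, h]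

variable [AddCommMonoid α]

theorem sum_comp_sort_rev (f : Fin n → α) : ∑ i : Fin n, (f ∘ sort f) i.rev = ∑ i, f i :=
  Equiv.sum_comp (Fin.revPerm.trans (sort f)) f

theorem sum_comp_sort_rev_lt_card (f : Fin n → α) (a : α) :
    ∑ i ∈ {i : Fin n | (i : ℕ) < #{j | a < f j}}, (f ∘ sort f) i.rev =
      ∑ j ∈ {j | a < f j}, f j := by
  set σ : Equiv.Perm (Fin n) := Fin.revPerm.trans (sort f)
  have hanti : Antitone (f ∘ σ) := (monotone_sort f).comp_antitone Fin.rev_anti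
  have hcard : #{j | a < f (σ j)} = #{j | a < f j} := card_equiv σ (by simp)
  refine sum_equiv σ (fun i => ?_) (fun _ _ => rfl)
  rw [mem_filter_univ, mem_filter_univ, ← hcard]
  exact lt_card_gt_iff_apply_gt_of_antitone hanti

end Tuple

namespace Matrix

variable {𝕜 : Type*} [RCLike 𝕜] {ι : Type*} [Fintype ι] [DecidableEq ι]

theorem trace_conjStarAlgAut (U : unitaryGroup ι 𝕜) (x : Matrix ι ι 𝕜) :
    (Unitary.conjStarAlgAut 𝕜 _ U x).trace = x.trace := by
  rw [Unitary.conjStarAlgAut_apply, trace_mul_cycle, Unitary.coe_star_mul_self, one_mul]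

theorem trace_diagonal_mul (d : ι → 𝕜) (x : Matrix ι ι 𝕜) :
    (diagonal d * x).trace = ∑ i, d i * x i i := by
  simp only [trace, diag_apply, diagonal_mul]

theorem IsHermitian.trace_mul_eq_sum {A : Matrix ι ι 𝕜} (hA : A.IsHermitian)
    (x : Matrix ι ι 𝕜) :
    (A * x).trace = ∑ j, (hA.eigenvalues j : 𝕜) *
      (Unitary.conjStarAlgAut 𝕜 _ hA.eigenvectorUnitary).symm x j j := by
  conv_lhs => rw [hA.spectral_theorem, ← StarAlgEquiv.apply_symm_apply
    (Unitary.conjStarAlgAut 𝕜 _ hA.eigenvectorUnitary) x]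
  rw [← map_mul, trace_conjStarAlgAut, trace_diagonal_mul]
  rfl

theorem IsHermitian.map_eigenvalues_eq_of_eq_conj {A : Matrix ι ι 𝕜} (hA : A.IsHermitian)
    (U : unitaryGroup ι 𝕜) (f : ι → ℝ)
    (h : A = Unitary.conjStarAlgAut 𝕜 _ U (diagonal (RCLike.ofReal ∘ f))) :
    univ.val.map hA.eigenvalues = univ.val.map f := by
  apply Multiset.map_injective (RCLike.ofReal_injective (K := 𝕜))
  rw [Multiset.map_map, Multiset.map_map, ← hA.roots_charpoly_eq_eigenvalues, h,
    Unitary.conjStarAlgAut_apply, charpoly_mul_comm, ← mul_assoc, Unitary.coe_star_mul_self,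
    one_mul, charpoly_diagonal, ← Polynomial.roots_multiset_prod_X_sub_C (univ.val.map _),
    Multiset.map_map]
  rfl

end Matrix

theorem svSorted_eq_of_posSemidef {n : ℕ} {A : Matrix (Fin n) (Fin n) ℂ} (hA : A.PosSemidef) :
    svSorted A = hA.1.eigenvalues ∘ Tuple.sort hA.1.eigenvalues := by
  set d := hA.1.eigenvalues
  have hB := (posSemidef_conjTranspose_mul_self A).1
  have hAA : Aᴴ * A = Unitary.conjStarAlgAut ℂ _ hA.1.eigenvectorUnitary
      (diagonal (RCLike.ofReal ∘ fun i => d i ^ 2)) := by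
    conv_lhs => rw [hA.1.eq, hA.1.spectral_theorem]
    rw [← map_mul, diagonal_mul_diagonal]
    congr! 3 with i
    simp [sq, d]
  have hmono : Monotone ((fun i => d i ^ 2) ∘ Tuple.sort d) := fun i j hij =>
    pow_le_pow_left₀ (hA.eigenvalues_nonneg _) (Tuple.monotone_sort d hij) 2
  have hsq : hB.eigenvalues ∘ Tuple.sort hB.eigenvalues = (fun i => d i ^ 2) ∘ Tuple.sort d := by
    rw [Tuple.comp_sort_eq_comp_sort_of_map_eq (hB.map_eigenvalues_eq_of_eq_conj _ _ hAA),
      Tuple.comp_sort_eq_comp_iff_monotone.mpr hmono]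
  funext i
  exact (congrArg Real.sqrt (congrFun hsq i)).trans (Real.sqrt_sq (hA.eigenvalues_nonneg _))

theorem sum_filter_eigenvalues_le_re_trace {n : ℕ} {A B : Matrix (Fin n) (Fin n) ℂ}
    (hA : A.PosSemidef) (hB : B.PosSemidef) (a : ℝ)
    (hsv : ∀ i : Fin n, (i : ℕ) < #{j | a < hA.1.eigenvalues j} →
      svSorted B i.rev = svSorted A i.rev) :
    ∑ j ∈ {j | a < hA.1.eigenvalues j}, hA.1.eigenvalues j ≤ RCLike.re B.trace := by
  set d := hA.1.eigenvalues
  set e := hB.1.eigenvalues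
  calc ∑ j ∈ {j | a < d j}, d j
      = ∑ i ∈ {i : Fin n | (i : ℕ) < #{j | a < d j}}, (d ∘ Tuple.sort d) i.rev :=
        (Tuple.sum_comp_sort_rev_lt_card d a).symm
    _ = ∑ i ∈ {i : Fin n | (i : ℕ) < #{j | a < d j}}, (e ∘ Tuple.sort e) i.rev :=
        sum_congr rfl fun i hi => by
          have := hsv i (mem_filter.mp hi).2
          rwa [svSorted_eq_of_posSemidef hA, svSorted_eq_of_posSemidef hB, eq_comm] at this
    _ ≤ ∑ i : Fin n, (e ∘ Tuple.sort e) i.rev :=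
        sum_le_sum_of_subset_of_nonneg (subset_univ _) fun _ _ _ => hB.eigenvalues_nonneg _
    _ = RCLike.re B.trace := by
        rw [Tuple.sum_comp_sort_rev, hB.1.trace_eq_sum_eigenvalues]
        simp [e]

namespace IsStarProjection

variable {𝕜 : Type*} [RCLike 𝕜] {ι : Type*} [Fintype ι] {q : Matrix ι ι 𝕜}

theorem matrix_apply_self_eq_sum_norm_sq (hq : IsStarProjection q) (j : ι) :
    q j j = ((∑ k, ‖q j k‖ ^ 2 : ℝ) : 𝕜) := by
  have hsymm (k : ι) : q k j = star (q j k) := by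
    rw [← conjTranspose_apply, ← star_eq_conjTranspose, hq.isSelfAdjoint]
  conv_lhs => rw [← hq.isIdempotentElem.eq, mul_apply]
  push_cast
  exact sum_congr rfl fun k _ => by rw [hsymm, RCLike.star_def, RCLike.mul_conj]

theorem re_matrix_apply_self_nonneg (hq : IsStarProjection q) (j : ι) :
    0 ≤ RCLike.re (q j j) := by
  rw [hq.matrix_apply_self_eq_sum_norm_sq, RCLike.ofReal_re]
  positivity

theorem matrix_apply_eq_zero_of_re_apply_self (hq : IsStarProjection q) {j : ι}
    (hj : RCLike.re (q j j) = 0) (k : ι) : q j k = 0 := by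
  rw [hq.matrix_apply_self_eq_sum_norm_sq, RCLike.ofReal_re,
    sum_eq_zero_iff_of_nonneg fun _ _ => by positivity] at hj
  simpa using hj k (mem_univ k)

variable [DecidableEq ι]

theorem re_matrix_apply_self_le_one (hq : IsStarProjection q) (j : ι) :
    RCLike.re (q j j) ≤ 1 := by
  simpa using hq.one_sub.re_matrix_apply_self_nonneg j

theorem eq_diagonal_of_re_apply_self {P : ι → Prop} [DecidablePred P] (hq : IsStarProjection q)
    (h : ∀ j, RCLike.re (q j j) = if P j then 1 else 0) :
    q = diagonal fun j => if P j then 1 else 0 := by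
  ext j k
  by_cases hj : P j
  · have hj' : RCLike.re ((1 - q) j j) = 0 := by simp [h, hj]
    have := hq.one_sub.matrix_apply_eq_zero_of_re_apply_self hj' k
    rw [Matrix.sub_apply, sub_eq_zero] at this
    rw [← this, one_apply, diagonal_apply]
    simp [hj]
  · rw [hq.matrix_apply_eq_zero_of_re_apply_self (by simp [h, hj]) k]
    simp [diagonal_apply, hj]

end IsStarProjection

theorem eq_ite_of_sum_filter_le_sum_mul {ι : Type*} [Fintype ι] {d c : ι → ℝ} {a : ℝ}
    (hc0 : ∀ i, 0 ≤ c i) (hc1 : ∀ i, c i ≤ 1) (hsum : ∑ i, c i = #{i | a < d i})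
    (hle : ∑ i ∈ {i | a < d i}, d i ≤ ∑ i, d i * c i) (i : ι) :
    c i = if a < d i then 1 else 0 := by
  set φ : ι → ℝ := fun i => if a < d i then (d i - a) * (1 - c i) else (a - d i) * c i
  have hφ0 (i : ι) : 0 ≤ φ i := by
    by_cases hi : a < d i
    · simp only [φ, hi, if_true]; nlinarith [hc1 i]
    · simp only [φ, hi, if_false]; nlinarith [hc0 i, not_lt.mp hi]
  have hφ_sum : ∑ i, φ i = (∑ i ∈ {i | a < d i}, d i - ∑ i, d i * c i)
      + a * (∑ i, c i - #{i | a < d i}) :=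
    calc ∑ i, φ i = ∑ i, ((if a < d i then d i else 0) - d i * c i + a * c i
          - if a < d i then a else 0) :=
          sum_congr rfl fun i _ => by simp only [φ]; split_ifs <;> ring
      _ = _ := by
          simp only [sum_sub_distrib, sum_add_distrib, ← sum_filter, ← mul_sum, sum_const,
            nsmul_eq_mul]
          ring
  have hφ (i : ι) : φ i = 0 :=
    (sum_eq_zero_iff_of_nonneg fun i _ => hφ0 i).mp
      (le_antisymm (by rw [hφ_sum, hsum]; linarith) (sum_nonneg fun i _ => hφ0 i)) i (mem_univ i)
  have hT (i : ι) (hi : a < d i) : c i = 1 := by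
    have := hφ i
    simp only [φ, hi, if_true, mul_eq_zero, sub_eq_zero] at this
    exact this.resolve_left hi.ne' |>.symm
  have hTc : ∑ i ∈ {i | ¬ a < d i}, c i = 0 := by
    have hsplit := sum_filter_add_sum_filter_not univ (fun i => a < d i) c
    rw [sum_congr rfl fun i hi => hT i (mem_filter.mp hi).2, sum_const, nsmul_one, hsum] at hsplit
    linarith
  by_cases hi : a < d i
  · simp [hT i hi, hi]
  · rw [if_neg hi]
    exact (sum_eq_zero_iff_of_nonneg fun i _ => hc0 i).mp hTc i
      (mem_filter.mpr ⟨mem_univ i, hi⟩)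

theorem stmt_16_general {n : ℕ} (z : Matrix (Fin n) (Fin n) ℂ) (hz : z.PosSemidef)
    (lam : ℝ)
    (r : Matrix (Fin n) (Fin n) ℂ)
    (hr : r = (hz.1.eigenvectorUnitary : Matrix (Fin n) (Fin n) ℂ) *
      Matrix.diagonal (fun i => if lam < hz.1.eigenvalues i then (1 : ℂ) else 0) *
      (star hz.1.eigenvectorUnitary : Matrix (Fin n) (Fin n) ℂ))
    (t : ℕ)
    (ht : t = (Finset.univ.filter fun i => lam < hz.1.eigenvalues i).card)
    (p : Matrix (Fin n) (Fin n) ℂ)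
    (hp : p * p = p) (hpH : pᴴ = p) (htp : p.trace = (t : ℂ))
    (hsv : ∀ i : Fin n, (i : ℕ) < t →
      svSorted (p * z * p) i.rev = svSorted z i.rev) :
    p = r := by
  set d := hz.1.eigenvalues
  set q := (Unitary.conjStarAlgAut ℂ _ hz.1.eigenvectorUnitary).symm p
  have hq : IsStarProjection q := IsStarProjection.map ⟨hp, hpH⟩ _
  have hpq : p = Unitary.conjStarAlgAut ℂ _ hz.1.eigenvectorUnitary q :=
    (StarAlgEquiv.apply_symm_apply _ p).symm
  have hB : (p * z * p).PosSemidef := by simpa [hpH] using hz.mul_mul_conjTranspose_same p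
  have hsum : ∑ j, RCLike.re (q j j) = #{j | lam < d j} := by
    have htq : q.trace = t := by rw [← htp, hpq, trace_conjStarAlgAut]
    rw [← ht]
    simpa [trace] using congrArg RCLike.re htq
  have htrace : RCLike.re (p * z * p).trace = ∑ j, d j * RCLike.re (q j j) := by
    rw [trace_mul_comm, ← mul_assoc, hp, trace_mul_comm, hz.1.trace_mul_eq_sum]
    simp [q, d]
  have hle := (sum_filter_eigenvalues_le_re_trace hz hB lam (ht ▸ hsv)).trans_eq htrace
  have hc := eq_ite_of_sum_filter_le_sum_mul hq.re_matrix_apply_self_nonneg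
    hq.re_matrix_apply_self_le_one hsum hle
  rw [hpq, hq.eq_diagonal_of_re_apply_self hc, hr]
  rfl

/-- Matrix version: if `z ⪰ 0`, `r` is the spectral projection of `z` for
`(λ, ∞)` of rank `t`, and `p` is a rank-`t` projection such that `p z p` has the
same `t` largest singular values as `z`, then `p = r`. -/
theorem stmt_16 {n : ℕ} (z : Matrix (Fin n) (Fin n) ℂ) (hz : z.PosSemidef)
    (lam : ℝ) (hlam : 0 < lam)
    (r : Matrix (Fin n) (Fin n) ℂ)
    (hr : r = (hz.1.eigenvectorUnitary : Matrix (Fin n) (Fin n) ℂ) *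
      Matrix.diagonal (fun i => if lam < hz.1.eigenvalues i then (1 : ℂ) else 0) *
      (star hz.1.eigenvectorUnitary : Matrix (Fin n) (Fin n) ℂ))
    (t : ℕ)
    (ht : t = (Finset.univ.filter fun i => lam < hz.1.eigenvalues i).card)
    (p : Matrix (Fin n) (Fin n) ℂ)
    (hp : p * p = p) (hpH : pᴴ = p) (htp : p.trace = (t : ℂ))
    (hsv : ∀ i : Fin n, (i : ℕ) < t →
      svSorted (p * z * p) i.rev = svSorted z i.rev) :
    p = r :=
  stmt_16_general z hz lam r hr t ht p hp hpH htp hsv
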